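/- arXiv:2006.03706 — 5 statements merged into one kernel-verified Lean document; each statement's English description precedes it below -/
import Mathlib

section
/- Let H be a Hilbert space, V a closed subspace with orthogonal projection P_V, L : H → ℝ^m a continuous linear map, and y ∈ range(L). If f̂ minimizes ‖f − P_V f‖ over all f ∈ H with L(f) = y, then f̂ − P_V f̂ is orthogonal to ker(L), i.e., ⟨f̂ − P_V f̂, u⟩ = 0 for all u ∈ ker(L). -/
open scoped RealInnerProductSpace

theorem stmt_3 {H : Type*} [NormedAddCommGroup H] [InnerProductSpace ℝ H]
    {m : ℕ} (V : Submodule ℝ H) [CompleteSpace V]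
    (L : H →L[ℝ] EuclideanSpace ℝ (Fin m)) (y : EuclideanSpace ℝ (Fin m))
    (fhat : H) (hdata : L fhat = y)
    (hmin : ∀ f : H, L f = y →
      ‖fhat - (V.orthogonalProjectionOnto fhat : H)‖ ≤ ‖f - (V.orthogonalProjectionOnto f : H)‖) :
    ∀ u ∈ LinearMap.ker (L : H →ₗ[ℝ] EuclideanSpace ℝ (Fin m)), ⟪fhat - (V.orthogonalProjectionOnto fhat : H), u⟫ = 0 := by
  intro u hu
  set g : H := fhat - (V.orthogonalProjectionOnto fhat : H) with hg
  set w : H := u - (V.orthogonalProjectionOnto u : H) with hw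
  have hPu : ⟪g, (V.orthogonalProjectionOnto u : H)⟫ = 0 :=
    V.starProjection_inner_eq_zero fhat _ (V.orthogonalProjectionOnto u).2
  have key : ∀ t : ℝ, ‖g‖ ≤ ‖g + t • w‖ := by
    intro t
    have hL : L (fhat + t • u) = y := by
      simp [map_add, map_smul, hdata, LinearMap.mem_ker.mp hu]
      exact Or.inr (LinearMap.mem_ker.mp hu)
    have h := hmin (fhat + t • u) hL
    have heq : fhat + t • u - (V.orthogonalProjectionOnto (fhat + t • u) : H) = g + t • w := by
      simp only [map_add, map_smul, hg, hw]
      push_cast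
      rw [smul_sub]
      abel
    rwa [heq] at h
  have hc : ⟪g, w⟫ = 0 := by
    by_contra hne
    set c : ℝ := ⟪g, w⟫ with hcdef
    set t : ℝ := -c / (‖w‖ ^ 2 + 1) with ht
    have hwpos : (0:ℝ) < ‖w‖ ^ 2 + 1 := by positivity
    have h1 : ‖g‖ ^ 2 ≤ ‖g + t • w‖ ^ 2 := by
      have := key t
      nlinarith [norm_nonneg g, norm_nonneg (g + t • w)]
    have hexp : ‖g + t • w‖ ^ 2 = ‖g‖ ^ 2 + 2 * (t * c) + t ^ 2 * ‖w‖ ^ 2 := by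
      rw [norm_add_sq_real, real_inner_smul_right, norm_smul, Real.norm_eq_abs, mul_pow,
        sq_abs, ← hcdef]
    rw [hexp, ht] at h1
    have hcsq : 0 < c ^ 2 := by positivity
    have h2 : 0 ≤ 2 * (-c / (‖w‖ ^ 2 + 1) * c) + (-c / (‖w‖ ^ 2 + 1)) ^ 2 * ‖w‖ ^ 2 := by
      linarith
    rw [div_pow] at h2
    have h3 : 0 ≤ -2 * c ^ 2 * (‖w‖ ^ 2 + 1) + c ^ 2 * ‖w‖ ^ 2 := by
      have hD : (0:ℝ) < (‖w‖ ^ 2 + 1) * (‖w‖ ^ 2 + 1) ^ 2 := by positivity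
      field_simp at h2
      rw [zero_mul] at h2
      nlinarith [h2, hwpos]
    nlinarith [h3, mul_pos hcsq hwpos]
  have : ⟪g, u⟫ = ⟪g, w⟫ + ⟪g, (V.orthogonalProjectionOnto u : H)⟫ := by
    rw [hw, inner_sub_right]; ring
  rw [this, hc, hPu, add_zero]
end

section
/- Let H be a Hilbert space, V a closed subspace, L : H → ℝ^m continuous linear, y ∈ range(L), and f̂ a minimizer of ‖f − P_V f‖ subject to L(f) = y. Then for every f with L(f) = y, ‖f − P_V f‖² = ‖f̂ − P_V f̂‖² + ‖(f − f̂) − P_V(f − f̂)‖². -/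
/-!
Write `Q = 1 - P_V`, the orthogonal projection onto `Vᗮ`. As `f` ranges over the fibre
`L f = L f̂`, the values `Q f` fill the affine set `Q f̂ + Q (ker L)`, on which `Q f̂` has
minimal norm; hence `Q f̂` is orthogonal to `Q (ker L)`, which contains `Q (f - f̂)`, and the
identity is Pythagoras for `Q f = Q f̂ + Q (f - f̂)`.
-/

open scoped RealInnerProductSpace

section MinimalNormOnFibre

variable {E F G : Type*} [AddCommGroup E] [Module ℝ E] [NormedAddCommGroup F]
  [InnerProductSpace ℝ F] [AddCommGroup G] [Module ℝ G]

theorem Submodule.inner_eq_zero_of_forall_norm_le_norm_add {K : Submodule ℝ F} {a : F}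
    (hmin : ∀ w ∈ K, ‖a‖ ≤ ‖a + w‖) {w : F} (hw : w ∈ K) : ⟪a, w⟫ = 0 := by
  have hbdd : BddBelow (Set.range fun w : (K : Set F) => ‖a - w‖) :=
    ⟨0, by rintro _ ⟨_, rfl⟩; exact norm_nonneg _⟩
  have hinf : ‖a - 0‖ = ⨅ w : (K : Set F), ‖a - w‖ :=
    le_antisymm
      (le_ciInf fun w => by simpa [sub_eq_add_neg] using hmin (-w) (K.neg_mem w.2))
      (ciInf_le hbdd ⟨0, K.zero_mem⟩)
  simpa using (norm_eq_iInf_iff_real_inner_eq_zero K K.zero_mem).1 hinf w hw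

theorem LinearMap.norm_sq_eq_add_of_forall_norm_le (Q : E →ₗ[ℝ] F) (L : E →ₗ[ℝ] G)
    {fhat : E} (hmin : ∀ f, L f = L fhat → ‖Q fhat‖ ≤ ‖Q f‖) {f : E} (hf : L f = L fhat) :
    ‖Q f‖ ^ 2 = ‖Q fhat‖ ^ 2 + ‖Q (f - fhat)‖ ^ 2 := by
  have horth : ⟪Q fhat, Q (f - fhat)⟫ = 0 := by
    refine Submodule.inner_eq_zero_of_forall_norm_le_norm_add (K := (ker L).map Q) ?_
      (Submodule.mem_map_of_mem (by simp [hf]))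
    rintro _ ⟨k, hk, rfl⟩
    simpa using hmin (fhat + k) (by simpa using hk)
  calc ‖Q f‖ ^ 2 = ‖Q fhat + Q (f - fhat)‖ ^ 2 := by rw [← map_add, add_sub_cancel]
    _ = ‖Q fhat‖ ^ 2 + ‖Q (f - fhat)‖ ^ 2 := by rw [norm_add_sq_real, horth]; ring

end MinimalNormOnFibre

theorem stmt_4 {H : Type*} [NormedAddCommGroup H] [InnerProductSpace ℝ H]
    {m : ℕ} (V : Submodule ℝ H) [CompleteSpace V]
    (L : H →L[ℝ] EuclideanSpace ℝ (Fin m)) (y : EuclideanSpace ℝ (Fin m))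
    (fhat : H) (hdata : L fhat = y)
    (hmin : ∀ f : H, L f = y →
      ‖fhat - (V.orthogonalProjection fhat : H)‖ ≤ ‖f - (V.orthogonalProjection f : H)‖) :
    ∀ f : H, L f = y →
      ‖f - (V.orthogonalProjection f : H)‖ ^ 2 =
        ‖fhat - (V.orthogonalProjection fhat : H)‖ ^ 2 +
          ‖(f - fhat) - (V.orthogonalProjection (f - fhat) : H)‖ ^ 2 := by
  intro f hf
  have hQ : ∀ g, Vᗮ.starProjection g = g - (V.orthogonalProjection g : H) := fun g => by simp
  subst hdata
  simpa only [ContinuousLinearMap.coe_coe, hQ] using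
    (Vᗮ.starProjection : H →ₗ[ℝ] H).norm_sq_eq_add_of_forall_norm_le L.toLinearMap
      (by simpa only [ContinuousLinearMap.coe_coe, hQ] using hmin) hf
end

section
/- Let H be a Hilbert space, V a closed subspace, L : H → ℝ^m continuous linear, ε > 0, y ∈ ℝ^m, and f̂ a minimizer of ‖f − P_V f‖ subject to L(f) = y, with ‖f̂ − P_V f̂‖ ≤ ε. Then for every f with L(f) = y and ‖f − P_V f‖ ≤ ε, the element u = f − f̂ ∈ ker(L) satisfies ‖u − P_V u‖ ≤ √(ε² − ‖f̂ − P_V f̂‖²). -/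
/-!
The map `Q = 1 - P_V` is linear, so the data-consistent elements `f̂ + t • u` with `u ∈ ker L`
have residuals `Q f̂ + t • Q u`. Minimality of `‖Q f̂‖` along every such line forces
`Q f̂ ⊥ Q u`, and Pythagoras gives `‖Q f‖² = ‖Q f̂‖² + ‖Q (f - f̂)‖² ≤ ε²`.
-/

open scoped InnerProductSpace

section

variable {E F G : Type*} [NormedAddCommGroup E] [InnerProductSpace ℝ E]
  [NormedAddCommGroup F] [InnerProductSpace ℝ F]

theorem real_inner_eq_zero_of_forall_norm_le_norm_add_smul {x y : F}
    (h : ∀ t : ℝ, ‖x‖ ≤ ‖x + t • y‖) : ⟪x, y⟫_ℝ = 0 := by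
  rcases eq_or_ne y 0 with rfl | hy
  · exact inner_zero_right x
  have hy' : 0 < ‖y‖ ^ 2 := by positivity
  have hsq := pow_le_pow_left₀ (norm_nonneg x) (h (-⟪x, y⟫_ℝ / ‖y‖ ^ 2)) 2
  -- at the vertex of the parabola `t ↦ ‖x + t • y‖²` the gain over `‖x‖²` is `⟪x, y⟫² / ‖y‖²`
  have hvertex : ‖x + (-⟪x, y⟫_ℝ / ‖y‖ ^ 2) • y‖ ^ 2 = ‖x‖ ^ 2 - ⟪x, y⟫_ℝ ^ 2 / ‖y‖ ^ 2 := by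
    rw [norm_add_sq_real, real_inner_smul_right, norm_smul, mul_pow, Real.norm_eq_abs, sq_abs]
    field_simp
    ring
  have : ⟪x, y⟫_ℝ ^ 2 / ‖y‖ ^ 2 ≤ 0 := by linarith
  have : ⟪x, y⟫_ℝ ^ 2 ≤ 0 := by rwa [div_le_iff₀ hy', zero_mul] at this
  exact pow_eq_zero_iff two_ne_zero |>.mp (le_antisymm this (sq_nonneg _))

variable [AddCommGroup G] [Module ℝ G] (Q : E →ₗ[ℝ] F) (L : E →ₗ[ℝ] G) {x₀ : E}

theorem real_inner_map_eq_zero_of_forall_norm_le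
    (hmin : ∀ x, L x = L x₀ → ‖Q x₀‖ ≤ ‖Q x‖) {u : E} (hu : u ∈ LinearMap.ker L) :
    ⟪Q x₀, Q u⟫_ℝ = 0 := by
  refine real_inner_eq_zero_of_forall_norm_le_norm_add_smul fun t ↦ ?_
  rw [← map_smul, ← map_add]
  exact hmin _ (by rw [map_add, map_smul, LinearMap.mem_ker.mp hu, smul_zero, add_zero])

theorem norm_map_sq_eq_of_forall_norm_le
    (hmin : ∀ x, L x = L x₀ → ‖Q x₀‖ ≤ ‖Q x‖) {x : E} (hx : L x = L x₀) :
    ‖Q x‖ ^ 2 = ‖Q x₀‖ ^ 2 + ‖Q (x - x₀)‖ ^ 2 := by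
  have hker : x - x₀ ∈ LinearMap.ker L := by rw [LinearMap.mem_ker, map_sub, hx, sub_self]
  have h := norm_add_sq_real (Q x₀) (Q (x - x₀))
  rw [real_inner_map_eq_zero_of_forall_norm_le Q L hmin hker, ← map_add, add_sub_cancel] at h
  linarith

end

theorem stmt_5_general {H : Type*} [NormedAddCommGroup H] [InnerProductSpace ℝ H]
    {m : ℕ} (V : Submodule ℝ H) [CompleteSpace V]
    (L : H →L[ℝ] EuclideanSpace ℝ (Fin m)) (ε : ℝ)
    (y : EuclideanSpace ℝ (Fin m)) (fhat : H) (hdata : L fhat = y)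
    (hmin : ∀ f : H, L f = y →
      ‖fhat - (Submodule.orthogonalProjectionOnto V fhat : H)‖ ≤ ‖f - (Submodule.orthogonalProjectionOnto V f : H)‖) :
    ∀ f : H, L f = y → ‖f - (Submodule.orthogonalProjectionOnto V f : H)‖ ≤ ε →
      (f - fhat) ∈ LinearMap.ker (L : H →ₗ[ℝ] EuclideanSpace ℝ (Fin m)) ∧
      ‖(f - fhat) - (Submodule.orthogonalProjectionOnto V (f - fhat) : H)‖ ≤
        Real.sqrt (ε ^ 2 - ‖fhat - (Submodule.orthogonalProjectionOnto V fhat : H)‖ ^ 2) := by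
  intro f hf hfε
  have hresidual (g : H) : g - (V.orthogonalProjectionOnto g : H) = Vᗮ.starProjection g := by
    rw [Submodule.starProjection_orthogonal_val, Submodule.starProjection_apply]
  simp only [hresidual] at hmin hfε ⊢
  have hpyth : ‖Vᗮ.starProjection f‖ ^ 2 =
      ‖Vᗮ.starProjection fhat‖ ^ 2 + ‖Vᗮ.starProjection (f - fhat)‖ ^ 2 :=
    norm_map_sq_eq_of_forall_norm_le (Vᗮ.starProjection : H →ₗ[ℝ] H) (L : H →ₗ[ℝ] EuclideanSpace ℝ (Fin m))
      (fun g hg ↦ hmin g (hg.trans hdata)) (hf.trans hdata.symm)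
  have hfε' : ‖Vᗮ.starProjection f‖ ^ 2 ≤ ε ^ 2 := pow_le_pow_left₀ (norm_nonneg _) hfε 2
  refine ⟨by rw [LinearMap.mem_ker, map_sub, ContinuousLinearMap.coe_coe, hf, hdata, sub_self],
    Real.le_sqrt_of_sq_le ?_⟩
  linarith

theorem stmt_5 {H : Type*} [NormedAddCommGroup H] [InnerProductSpace ℝ H]
    {m : ℕ} (V : Submodule ℝ H) [CompleteSpace V]
    (L : H →L[ℝ] EuclideanSpace ℝ (Fin m)) (ε : ℝ) (hε : 0 < ε)
    (y : EuclideanSpace ℝ (Fin m)) (fhat : H) (hdata : L fhat = y)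
    (hmin : ∀ f : H, L f = y →
      ‖fhat - (Submodule.orthogonalProjectionOnto V fhat : H)‖ ≤ ‖f - (Submodule.orthogonalProjectionOnto V f : H)‖)
    (hmodel : ‖fhat - (Submodule.orthogonalProjectionOnto V fhat : H)‖ ≤ ε) :
    ∀ f : H, L f = y → ‖f - (Submodule.orthogonalProjectionOnto V f : H)‖ ≤ ε →
      (f - fhat) ∈ LinearMap.ker (L : H →ₗ[ℝ] EuclideanSpace ℝ (Fin m)) ∧
      ‖(f - fhat) - (Submodule.orthogonalProjectionOnto V (f - fhat) : H)‖ ≤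
        Real.sqrt (ε ^ 2 - ‖fhat - (Submodule.orthogonalProjectionOnto V fhat : H)‖ ^ 2) :=
  stmt_5_general V L ε y fhat hdata hmin
end

section
/- Let H be a Hilbert space, u₁,…,u_m linearly independent, L(f) = (⟨u_i,f⟩), and V = span{u_i : i ∈ I} for some subset I ⊆ [1:m]. Then the minimum-norm interpolant f̂ (minimizer of ‖f‖ subject to L(f) = y) also minimizes ‖f − P_V f‖ subject to L(f) = y. -/
/-!
A minimum-norm interpolant is orthogonal to every direction `w ∈ ker L` along which it can be
moved without changing the data, so `f̂ ∈ (ker L)ᗮ`. Since `V` is spanned by some of the `uᵢ`,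
`ker L = (span uᵢ)ᗮ ⊆ Vᗮ`. Hence for any interpolant `f`, the difference `g = f - f̂` lies in `Vᗮ`
and is orthogonal to `f̂`, so `f - P_V f = (f̂ - P_V f̂) + g` is an orthogonal sum and Pythagoras
gives `‖f̂ - P_V f̂‖ ≤ ‖f - P_V f‖`.
-/

open scoped RealInnerProductSpace

open Submodule Set

namespace Submodule

variable {𝕜 E : Type*} [RCLike 𝕜] [NormedAddCommGroup E] [InnerProductSpace 𝕜 E]

theorem mem_orthogonal_span_iff {s : Set E} {v : E} :
    v ∈ (span 𝕜 s)ᗮ ↔ ∀ u ∈ s, inner 𝕜 u v = 0 := by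
  simp_rw [mem_orthogonal, ← mem_orthogonal_singleton_iff_inner_left (𝕜 := 𝕜)]
  exact span_le

theorem mem_orthogonal_of_forall_norm_le_norm_add (K : Submodule 𝕜 E) {x : E}
    (h : ∀ w ∈ K, ‖x‖ ≤ ‖x + w‖) : x ∈ Kᗮ := by
  have hmin : ‖x - 0‖ = ⨅ w : K, ‖x - w‖ :=
    le_antisymm (le_ciInf fun w => by simpa [sub_eq_add_neg] using h (-w) (K.neg_mem w.2))
      (by simpa using ciInf_le ⟨0, forall_mem_range.2 fun w : K => norm_nonneg (x - w)⟩ (0 : K))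
  rw [mem_orthogonal']
  simpa using (K.norm_eq_iInf_iff_inner_eq_zero K.zero_mem).1 hmin

theorem norm_sub_starProjection_le_of_sub_mem_orthogonal (V : Submodule 𝕜 E)
    [V.HasOrthogonalProjection] {x y : E} (hV : y - x ∈ Vᗮ) (hx : inner 𝕜 x (y - x) = 0) :
    ‖x - V.starProjection x‖ ≤ ‖y - V.starProjection y‖ := by
  have hPy : V.starProjection y = V.starProjection x := by
    rw [← sub_eq_zero, ← map_sub, (V.starProjection_apply_eq_zero_iff).2 hV]
  have hy : y - V.starProjection y = (x - V.starProjection x) + (y - x) := by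
    rw [hPy]; abel
  have hperp : inner 𝕜 (x - V.starProjection x) (y - x) = 0 := by
    rw [inner_sub_left, hx, inner_right_of_mem_orthogonal (V.starProjection_apply_mem x) hV,
      sub_zero]
  rw [hy]
  refine nonneg_le_nonneg_of_sq_le_sq (norm_nonneg _) ?_
  rw [norm_add_sq_eq_norm_sq_add_norm_sq_of_inner_eq_zero _ _ hperp]
  exact le_add_of_nonneg_right (mul_self_nonneg _)

end Submodule

theorem stmt_12_general {H : Type*} [NormedAddCommGroup H] [InnerProductSpace ℝ H]
    {m : ℕ} (u : Fin m → H)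
    (I : Set (Fin m)) (V : Submodule ℝ H) [CompleteSpace V]
    (hV : V = Submodule.span ℝ (u '' I))
    (y : Fin m → ℝ) (fhat : H) (hdata : ∀ i, ⟪u i, fhat⟫ = y i)
    (hmin : ∀ f : H, (∀ i, ⟪u i, f⟫ = y i) → ‖fhat‖ ≤ ‖f‖) :
    ∀ f : H, (∀ i, ⟪u i, f⟫ = y i) →
      ‖fhat - (Submodule.orthogonalProjection V fhat : H)‖ ≤ ‖f - (Submodule.orthogonalProjection V f : H)‖ := by
  intro f hf
  set kerL := (span ℝ (range u))ᗮ
  have hfhat : fhat ∈ kerLᗮ := kerL.mem_orthogonal_of_forall_norm_le_norm_add fun w hw =>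
    hmin _ fun i => by
      rw [inner_add_right, hdata i, mem_orthogonal_span_iff.1 hw _ (mem_range_self i), add_zero]
  have hdiff : f - fhat ∈ kerL := mem_orthogonal_span_iff.2 <| forall_mem_range.2 fun i => by
    rw [inner_sub_right, hf i, hdata i, sub_self]
  have hkerL : kerL ≤ Vᗮ := orthogonal_le (hV ▸ span_mono (image_subset_range u I))
  exact V.norm_sub_starProjection_le_of_sub_mem_orthogonal (hkerL hdiff)
    (inner_left_of_mem_orthogonal hdiff hfhat)

theorem stmt_12 {H : Type*} [NormedAddCommGroup H] [InnerProductSpace ℝ H]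
    {m : ℕ} (u : Fin m → H) (hu : LinearIndependent ℝ u)
    (I : Set (Fin m)) (V : Submodule ℝ H) [CompleteSpace V]
    (hV : V = Submodule.span ℝ (u '' I))
    (y : Fin m → ℝ) (fhat : H) (hdata : ∀ i, ⟪u i, fhat⟫ = y i)
    (hmin : ∀ f : H, (∀ i, ⟪u i, f⟫ = y i) → ‖fhat‖ ≤ ‖f‖) :
    ∀ f : H, (∀ i, ⟪u i, f⟫ = y i) →
      ‖fhat - (Submodule.orthogonalProjection V fhat : H)‖ ≤ ‖f - (Submodule.orthogonalProjection V f : H)‖ :=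
  stmt_12_general u I V hV y fhat hdata hmin
end

section
/- Let F, H be real Hilbert/normed spaces with H a Hilbert space, T : F → H linear, V ⊆ H a closed subspace, L : F → ℝ^m linear, y ∈ range(L), and f̂ a minimizer over {f : L(f) = y} of ‖Tf − P_V(Tf)‖. Then ⟨T f̂ − P_V(T f̂), T u⟩ = 0 for every u ∈ ker(L). -/
open scoped RealInnerProductSpace

/-!
The residual `f ↦ T f - P_V (T f)` is the linear map `P_{Vᗮ} ∘ T`. Minimality of `f̂` on the
fibre `L f = y` says that `0` is the point of the subspace `P_{Vᗮ} (T (ker L))` closest to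
`P_{Vᗮ} (T f̂)`, so the latter is orthogonal to that subspace; as it lies in `Vᗮ`, pairing it
with `P_{Vᗮ} (T u)` or with `T u` gives the same inner product.
-/

theorem Submodule.inner_eq_zero_of_forall_norm_le_norm_sub {E : Type*} [NormedAddCommGroup E]
    [InnerProductSpace ℝ E] (K : Submodule ℝ E) {x : E} (hx : ∀ w ∈ K, ‖x‖ ≤ ‖x - w‖) :
    ∀ w ∈ K, ⟪x, w⟫ = 0 := by
  have hinf : ‖x - 0‖ = ⨅ w : (K : Set E), ‖x - w‖ := by
    refine le_antisymm (le_ciInf fun w ↦ by simpa using hx w w.2) ?_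
    exact ciInf_le (f := fun w : (K : Set E) ↦ ‖x - w‖)
      ⟨0, Set.forall_mem_range.2 fun _ ↦ norm_nonneg _⟩ ⟨0, K.zero_mem⟩
  simpa using (K.norm_eq_iInf_iff_real_inner_eq_zero K.zero_mem).1 hinf

theorem LinearMap.inner_eq_zero_of_forall_norm_le_of_eq {F E M : Type*} [AddCommGroup F]
    [Module ℝ F] [NormedAddCommGroup E] [InnerProductSpace ℝ E] [AddCommGroup M] [Module ℝ M]
    (g : F →ₗ[ℝ] E) (L : F →ₗ[ℝ] M) {f₀ : F} (hmin : ∀ f, L f = L f₀ → ‖g f₀‖ ≤ ‖g f‖) :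
    ∀ u ∈ LinearMap.ker L, ⟪g f₀, g u⟫ = 0 := by
  intro u hu
  refine ((LinearMap.ker L).map g).inner_eq_zero_of_forall_norm_le_norm_sub ?_ _
    (Submodule.mem_map_of_mem hu)
  rintro _ ⟨v, hv, rfl⟩
  rw [← map_sub]
  exact hmin _ (by simp [LinearMap.mem_ker.1 hv])

theorem Submodule.inner_starProjection_left_eq_inner_starProjection {𝕜 E : Type*} [RCLike 𝕜]
    [NormedAddCommGroup E] [InnerProductSpace 𝕜 E] (K : Submodule 𝕜 E)
    [K.HasOrthogonalProjection] (u v : E) :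
    inner 𝕜 (K.starProjection u) v = inner 𝕜 (K.starProjection u) (K.starProjection v) := by
  rw [K.inner_starProjection_left_eq_right, K.inner_starProjection_left_eq_right,
    K.starProjection_eq_self_iff.2 (K.starProjection_apply_mem v)]

theorem stmt_13_general {F H : Type*} [NormedAddCommGroup F] [NormedSpace ℝ F]
    [NormedAddCommGroup H] [InnerProductSpace ℝ H]
    {m : ℕ} (T : F →ₗ[ℝ] H) (V : Submodule ℝ H) [CompleteSpace V]
    (L : F →ₗ[ℝ] (Fin m → ℝ)) (y : Fin m → ℝ)
    (fhat : F) (hdata : L fhat = y)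
    (hmin : ∀ f : F, L f = y →
      ‖T fhat - (Submodule.orthogonalProjectionOnto V (T fhat) : H)‖ ≤
        ‖T f - (Submodule.orthogonalProjectionOnto V (T f) : H)‖) :
    ∀ u ∈ LinearMap.ker L,
      ⟪T fhat - (Submodule.orthogonalProjectionOnto V (T fhat) : H), T u⟫ = 0 := by
  set residual : F →ₗ[ℝ] H := Vᗮ.starProjection.toLinearMap ∘ₗ T
  have residual_apply (f : F) :
      residual f = T f - (Submodule.orthogonalProjectionOnto V (T f) : H) := by
    simp [residual]
  intro u hu
  have horth := residual.inner_eq_zero_of_forall_norm_le_of_eq L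
    (fun f hf ↦ by simpa only [residual_apply] using hmin f (hf.trans hdata)) u hu
  rw [← residual_apply]
  exact (Vᗮ.inner_starProjection_left_eq_inner_starProjection _ _).trans horth

theorem stmt_13 {F H : Type*} [NormedAddCommGroup F] [NormedSpace ℝ F]
    [NormedAddCommGroup H] [InnerProductSpace ℝ H]
    {m : ℕ} (T : F →ₗ[ℝ] H) (V : Submodule ℝ H) [CompleteSpace V]
    (L : F →ₗ[ℝ] (Fin m → ℝ)) (y : Fin m → ℝ) (hy : y ∈ LinearMap.range L)
    (fhat : F) (hdata : L fhat = y)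
    (hmin : ∀ f : F, L f = y →
      ‖T fhat - (Submodule.orthogonalProjectionOnto V (T fhat) : H)‖ ≤
        ‖T f - (Submodule.orthogonalProjectionOnto V (T f) : H)‖) :
    ∀ u ∈ LinearMap.ker L,
      ⟪T fhat - (Submodule.orthogonalProjectionOnto V (T fhat) : H), T u⟫ = 0 :=
  stmt_13_general T V L y fhat hdata hmin
end
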